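/- arXiv:2605.11657 — 4 statements merged into one kernel-verified Lean document; each statement's English description precedes it below -/
import Mathlib

section
/- Let N be a positive integer, B > 0, K > 0, c₁ = K/(2B²), T = N/B. For 0 ≤ m ≤ N-1, define the stepped frequency on interval n by f_{m,n} = K(n+1/2)/B + m/T − B·⌊(K(n+1/2)/B + m/T)/B⌋, and the accumulated phase φ_m(n/B) = (1/B)·Σ_{i=0}^{n-1} f_{m,i}. Then for every n, φ_m(n/B) − (c₁n² + mn/N) is an integer, and hence exp(j2π φ_m(n/B)) = exp(j2π(c₁n² + mn/N)). -/
/-!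
Wrapping a frequency into `[0, B)` subtracts an integer multiple of `B`, so each phase increment
`f_{m,i} / B` changes by an integer and the accumulated phase differs by an integer from that of
the unwrapped chirp `K (i + 1/2) / B + m / T`. Because the frequency is sampled at interval
midpoints, `∑_{i<n} (i + 1/2) = n² / 2` holds exactly, so the unwrapped phase is `c₁ n² + m n / N`.
-/

open Real Complex Finset

lemma sum_range_add_half (n : ℕ) : ∑ i ∈ range n, ((i : ℝ) + 1 / 2) = (n : ℝ) ^ 2 / 2 := by
  induction n with
  | zero => simp
  | succ k ih => rw [sum_range_succ, ih]; push_cast; ring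

lemma inv_mul_sum_sub_mul_floor {ι : Type*} (s : Finset ι) (a : ι → ℝ) {B : ℝ} (hB : B ≠ 0) :
    (1 / B) * ∑ i ∈ s, (a i - B * ⌊a i / B⌋) =
      (1 / B) * ∑ i ∈ s, a i - ((∑ i ∈ s, ⌊a i / B⌋ : ℤ) : ℝ) := by
  rw [sum_sub_distrib, ← mul_sum, Int.cast_sum]
  field_simp

lemma inv_mul_sum_linear_chirp {B : ℝ} (hB : B ≠ 0) (K : ℝ) (N m n : ℕ) :
    (1 / B) * ∑ i ∈ range n, (K * ((i : ℝ) + 1 / 2) / B + m / (N / B)) =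
      K / (2 * B ^ 2) * n ^ 2 + m * n / N := by
  rw [sum_add_distrib, ← sum_div, ← mul_sum, sum_range_add_half, sum_const, card_range,
    nsmul_eq_mul]
  field_simp

lemma exp_two_pi_I_mul_eq_of_sub_eq_int {x y : ℝ} {z : ℤ} (h : x - y = z) :
    Complex.exp (2 * π * I * x) = Complex.exp (2 * π * I * y) := by
  rw [show x = y + z by linarith, ofReal_add, mul_add, Complex.exp_add, ofReal_intCast,
    mul_comm _ (z : ℂ), exp_int_mul_two_pi_mul_I, mul_one]

theorem sfdm_sampling_equivalence_general
    (N : ℕ) (B K : ℝ) (hB : 0 < B)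
    (c₁ T : ℝ) (hc₁ : c₁ = K / (2 * B ^ 2)) (hT : T = N / B)
    (f : ℕ → ℕ → ℝ)
    (hf : ∀ m n, f m n =
      K * ((n : ℝ) + 1 / 2) / B + (m : ℝ) / T
        - B * ⌊(K * ((n : ℝ) + 1 / 2) / B + (m : ℝ) / T) / B⌋)
    (φ : ℕ → ℕ → ℝ)
    (hφ : ∀ m n, φ m n = (1 / B) * ∑ i ∈ Finset.range n, f m i)
    (m : ℕ) :
    ∀ n : ℕ,
      (∃ z : ℤ, φ m n - (c₁ * (n : ℝ) ^ 2 + (m : ℝ) * n / N) = z) ∧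
      Complex.exp (2 * π * Complex.I * (φ m n)) =
        Complex.exp (2 * π * Complex.I * (c₁ * (n : ℝ) ^ 2 + (m : ℝ) * n / N)) := by
  intro n
  subst hc₁ hT
  have hphase : φ m n - (K / (2 * B ^ 2) * n ^ 2 + m * n / N) =
      ((-∑ i ∈ range n, ⌊(K * ((i : ℝ) + 1 / 2) / B + m / (N / B)) / B⌋ : ℤ) : ℝ) := by
    rw [hφ, sum_congr rfl fun i _ => hf m i, inv_mul_sum_sub_mul_floor _ _ hB.ne',
      inv_mul_sum_linear_chirp hB.ne', Int.cast_neg]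
    ring
  exact ⟨⟨_, hphase⟩, by exact_mod_cast exp_two_pi_I_mul_eq_of_sub_eq_int hphase⟩

theorem sfdm_sampling_equivalence
    (N : ℕ) (hN : 0 < N) (B K : ℝ) (hB : 0 < B) (hK : 0 < K)
    (c₁ T : ℝ) (hc₁ : c₁ = K / (2 * B ^ 2)) (hT : T = N / B)
    (f : ℕ → ℕ → ℝ)
    (hf : ∀ m n, f m n =
      K * ((n : ℝ) + 1 / 2) / B + (m : ℝ) / T
        - B * ⌊(K * ((n : ℝ) + 1 / 2) / B + (m : ℝ) / T) / B⌋)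
    (φ : ℕ → ℕ → ℝ)
    (hφ : ∀ m n, φ m n = (1 / B) * ∑ i ∈ Finset.range n, f m i)
    (m : ℕ) (hm : m ≤ N - 1) :
    ∀ n : ℕ,
      (∃ z : ℤ, φ m n - (c₁ * (n : ℝ) ^ 2 + (m : ℝ) * n / N) = z) ∧
      Complex.exp (2 * π * Complex.I * (φ m n)) =
        Complex.exp (2 * π * Complex.I * (c₁ * (n : ℝ) ^ 2 + (m : ℝ) * n / N)) :=
  sfdm_sampling_equivalence_general N B K hB c₁ T hc₁ hT f hf φ hφ m
end

section
/- With the setup of the midpoint construction but using representative time (n+θ)/B with θ ∈ [0,1), the accumulated phase at t_n = n/B equals c₁n² + mn/N + c₁(2θ−1)n minus an integer. Consequently, exp(j2π φ_{m,θ}(t_n)) = exp(j2π(c₁n² + mn/N)) for all n ∈ {0,...,N−1}, all m, and all values of the normalized chirp parameter α = c₁N in an open interval, if and only if θ = 1/2 (assuming N ≥ 2). -/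
/-!
Each summand of `phiTheta` is `B` times the fractional part of `(2α(i+θ) + m)/N`, so the phase
is the unwrapped sum `c₁n² + mn/N + c₁(2θ-1)n` minus an integer. The samples are therefore
preserved exactly when the residual `c₁(2θ-1)n` is an integer. For `m = 0`, `n = 1` this makes
`α ↦ α(2θ-1)/N` integer-valued on the interval `(a, b)`; a continuous map from a connected set
into the discrete set `ℤ ⊆ ℝ` is constant, so `2θ - 1 = 0`.
-/

open Real Complex Finset

/-- Accumulated SFDM-type phase at `t_n = n/B` when the representative time on each
sampling interval is `(i+θ)/B`, for normalized chirp parameter `α` (so that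
`K = 2*α*B^2/N` and `c₁ = α/N`, `T = N/B`). -/
noncomputable def phiTheta (N : ℕ) (B θ α : ℝ) (m n : ℕ) : ℝ :=
  (1 / B) * ∑ i ∈ Finset.range n,
    ((2 * α * B ^ 2 / N) * ((i : ℝ) + θ) / B + (m : ℝ) / ((N : ℝ) / B)
      - B * ⌊((2 * α * B ^ 2 / N) * ((i : ℝ) + θ) / B + (m : ℝ) / ((N : ℝ) / B)) / B⌋)

theorem eq_zero_of_forall_mul_mem_range_intCast {c a b : ℝ} (hab : a < b)
    (h : ∀ x ∈ Set.Ioo a b, ∃ k : ℤ, c * x = k) : c = 0 := by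
  obtain ⟨x, hax, hxb⟩ := exists_between hab
  obtain ⟨y, hxy, hyb⟩ := exists_between hxb
  have hconst : c * x = c * y :=
    isPreconnected_Ioo.constant_of_mapsTo Int.isClosedEmbedding_coe_real.isInducing.isDiscrete_range
      (continuousOn_const.mul continuousOn_id) (fun z hz => (h z hz).imp fun _ hk => hk.symm)
      ⟨hax, hxb⟩ ⟨hax.trans hxy, hyb⟩
  exact (mul_eq_mul_left_iff.mp hconst).resolve_left hxy.ne

theorem exp_two_pi_I_mul_eq_exp_iff {x y : ℝ} :
    exp (2 * π * I * x) = exp (2 * π * I * y) ↔ ∃ k : ℤ, x = y + k := by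
  rw [exp_eq_exp_iff_exists_int]
  refine exists_congr fun k => ?_
  rw [show 2 * π * I * y + k * (2 * π * I) = 2 * π * I * ((y + k : ℝ) : ℂ) by push_cast; ring,
    mul_right_inj' two_pi_I_ne_zero, ofReal_inj]

theorem sum_range_chirp_phase (N : ℕ) (θ α : ℝ) (m n : ℕ) :
    ∑ i ∈ range n, (2 * α * ((i : ℝ) + θ) + m) / N =
      (α / N) * (n : ℝ) ^ 2 + (m : ℝ) * n / N + (α / N) * (2 * θ - 1) * n := by
  induction n with
  | zero => simp
  | succ k ih => rw [sum_range_succ, ih]; push_cast; ring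

theorem phiTheta_eq_sum_fract (N : ℕ) {B : ℝ} (hB : B ≠ 0) (θ α : ℝ) (m n : ℕ) :
    phiTheta N B θ α m n = ∑ i ∈ range n, Int.fract ((2 * α * ((i : ℝ) + θ) + m) / N) := by
  rw [phiTheta, mul_sum]
  refine sum_congr rfl fun i _ => ?_
  have harg : (2 * α * B ^ 2 / N) * ((i : ℝ) + θ) / B + (m : ℝ) / ((N : ℝ) / B)
      = B * ((2 * α * ((i : ℝ) + θ) + m) / N) := by
    field_simp
  rw [harg, mul_div_cancel_left₀ _ hB, Int.fract]
  field_simp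

theorem phiTheta_eq_sub_intCast (N : ℕ) {B : ℝ} (hB : B ≠ 0) (θ α : ℝ) (m n : ℕ) :
    ∃ z : ℤ, phiTheta N B θ α m n =
      (α / N) * (n : ℝ) ^ 2 + (m : ℝ) * n / N + (α / N) * (2 * θ - 1) * n - z := by
  refine ⟨∑ i ∈ range n, ⌊(2 * α * ((i : ℝ) + θ) + m) / N⌋, ?_⟩
  simp only [phiTheta_eq_sum_fract N hB, Int.fract, sum_sub_distrib, sum_range_chirp_phase,
    Int.cast_sum]

theorem exp_phiTheta_eq_iff (N : ℕ) {B : ℝ} (hB : B ≠ 0) (θ α : ℝ) (m n : ℕ) :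
    Complex.exp (2 * π * I * phiTheta N B θ α m n) =
        Complex.exp (2 * π * I * ((α / N) * (n : ℝ) ^ 2 + (m : ℝ) * n / N)) ↔
      ∃ k : ℤ, (α / N) * (2 * θ - 1) * n = k := by
  obtain ⟨z, hz⟩ := phiTheta_eq_sub_intCast N hB θ α m n
  have hcast : ((α / N : ℂ) * (n : ℝ) ^ 2 + (m : ℝ) * n / N) =
      (((α / N) * (n : ℝ) ^ 2 + (m : ℝ) * n / N : ℝ) : ℂ) := by
    push_cast; ring
  rw [hz, hcast, exp_two_pi_I_mul_eq_exp_iff]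
  constructor
  · rintro ⟨k, hk⟩
    exact ⟨k + z, by push_cast; linarith⟩
  · rintro ⟨k, hk⟩
    exact ⟨k - z, by push_cast; linarith⟩

theorem midpoint_uniqueness_general
    (N : ℕ) (hN : 2 ≤ N) (B : ℝ) (hB : 0 < B)
    (θ : ℝ)
    (a b : ℝ) (hab : a < b) :
    (∀ α : ℝ, 0 < α → ∀ m n : ℕ, m ≤ N - 1 → n ≤ N - 1 →
      ∃ z : ℤ, phiTheta N B θ α m n =
        (α / N) * (n : ℝ) ^ 2 + (m : ℝ) * n / N + (α / N) * (2 * θ - 1) * n - z) ∧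
    ((∀ α ∈ Set.Ioo a b, ∀ m n : ℕ, m ≤ N - 1 → n ≤ N - 1 →
        Complex.exp (2 * π * Complex.I * phiTheta N B θ α m n) =
          Complex.exp (2 * π * Complex.I *
            ((α / N) * (n : ℝ) ^ 2 + (m : ℝ) * n / N)))
      ↔ θ = 1 / 2) := by
  refine ⟨fun α _ m n _ _ => phiTheta_eq_sub_intCast N hB.ne' θ α m n, ?_⟩
  constructor
  · intro H
    have hslope : (2 * θ - 1) / N = 0 := eq_zero_of_forall_mul_mem_range_intCast hab fun α hα => by
      obtain ⟨k, hk⟩ :=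
        (exp_phiTheta_eq_iff N hB.ne' θ α 0 1).mp (H α hα 0 1 (Nat.zero_le _) (by omega))
      exact ⟨k, by rw [← hk]; push_cast; ring⟩
    have hN0 : (N : ℝ) ≠ 0 := by positivity
    linarith [(div_eq_zero_iff.mp hslope).resolve_right hN0]
  · rintro rfl α _ m n _ _
    exact (exp_phiTheta_eq_iff N hB.ne' (1 / 2) α m n).mpr ⟨0, by norm_num⟩

theorem midpoint_uniqueness
    (N : ℕ) (hN : 2 ≤ N) (B : ℝ) (hB : 0 < B)
    (θ : ℝ) (hθ : θ ∈ Set.Ico (0 : ℝ) 1)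
    (a b : ℝ) (ha : 0 < a) (hab : a < b) :
    (∀ α : ℝ, 0 < α → ∀ m n : ℕ, m ≤ N - 1 → n ≤ N - 1 →
      ∃ z : ℤ, phiTheta N B θ α m n =
        (α / N) * (n : ℝ) ^ 2 + (m : ℝ) * n / N + (α / N) * (2 * θ - 1) * n - z) ∧
    ((∀ α ∈ Set.Ioo a b, ∀ m n : ℕ, m ≤ N - 1 → n ≤ N - 1 →
        Complex.exp (2 * π * Complex.I * phiTheta N B θ α m n) =
          Complex.exp (2 * π * Complex.I *
            ((α / N) * (n : ℝ) ^ 2 + (m : ℝ) * n / N)))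
      ↔ θ = 1 / 2) :=
  midpoint_uniqueness_general N hN B hB θ a b hab
end

section
/- Let α > 0 and N a positive integer. All the jumps e^{−j2π(Nr−m)/(2α)} − 1 vanish for every m ∈ {0,...,N−1} and every integer r with m/N < r < 2α + m/N, if and only if either α ≤ 1/(2N) (in which case no such r exists) or 1/(2α) is a positive integer, i.e., α = 1/(2k) for some positive integer k. -/
open Real Complex

/-!
The jump vanishes iff `(N r - m) / (2α)` is an integer, and `d = N r - m` ranges over integers
with `0 < d < 2αN`. If `2αN ≤ 1` there are none; otherwise `d = 1` occurs (at `m = N - 1`,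
`r = 1`), which forces `1 / (2α) ∈ ℤ`, and conversely `1 / (2α) ∈ ℤ` makes every `d / (2α)` integral.
-/

theorem exp_neg_two_pi_I_mul_sub_one_eq_zero_iff (t : ℝ) :
    exp (-(2 * π * I * t)) - 1 = 0 ↔ ∃ n : ℤ, t = n := by
  have h2πI : 2 * π * I ≠ 0 := by simp [Real.pi_ne_zero, I_ne_zero]
  rw [sub_eq_zero, Complex.exp_eq_one_iff]
  constructor
  · rintro ⟨n, hn⟩
    refine ⟨-n, ?_⟩
    have : (t : ℂ) = -n := mul_left_cancel₀ h2πI (by linear_combination -hn)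
    exact_mod_cast this
  · rintro ⟨n, rfl⟩
    exact ⟨-n, by push_cast; ring⟩

section WrappingIndices

variable {N : ℕ} {α : ℝ} {m : ℕ} {r : ℤ}

theorem natCast_mul_sub_pos_of_div_lt (hN : 0 < N) (h : (m : ℝ) / N < r) :
    (0 : ℝ) < N * r - m := by
  rw [div_lt_iff₀ (by exact_mod_cast hN)] at h
  linarith

theorem natCast_mul_sub_lt_of_lt_add_div (hN : 0 < N) (h : (r : ℝ) < 2 * α + m / N) :
    (N * r - m : ℝ) < 2 * α * N := by
  have hN' : (0 : ℝ) < N := by exact_mod_cast hN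
  have := mul_lt_mul_of_pos_right h hN'
  rw [add_mul, div_mul_cancel₀ _ hN'.ne'] at this
  linarith

theorem not_lt_two_mul_add_div_of_div_lt (hN : 0 < N) (hα : α ≤ 1 / (2 * N))
    (h₁ : (m : ℝ) / N < r) : ¬(r : ℝ) < 2 * α + m / N := by
  intro h₂
  have hpos : (0 : ℤ) < N * r - m := by exact_mod_cast natCast_mul_sub_pos_of_div_lt hN h₁
  have hαN : 2 * α * N ≤ 1 := by
    rw [le_div_iff₀ (by positivity)] at hα
    linarith
  have hlt : (N * r - m : ℤ) < 1 := by
    exact_mod_cast (natCast_mul_sub_lt_of_lt_add_div hN h₂).trans_le hαN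
  omega

theorem pred_div_lt_one_and_one_lt_two_mul_add_pred_div (hN : 0 < N) (hα : 1 / (2 * N) < α) :
    ((N - 1 : ℕ) : ℝ) / N < (1 : ℤ) ∧ ((1 : ℤ) : ℝ) < 2 * α + ((N - 1 : ℕ) : ℝ) / N := by
  have hN' : (0 : ℝ) < N := by exact_mod_cast hN
  rw [Nat.cast_sub hN, Nat.cast_one, sub_div, div_self hN'.ne', Int.cast_one]
  rw [div_lt_iff₀ (by positivity)] at hα
  have : 1 / (N : ℝ) < 2 * α := by rw [div_lt_iff₀ hN']; linarith
  constructor <;> linarith [show 0 < 1 / (N : ℝ) by positivity]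

end WrappingIndices

theorem exists_eq_one_div_two_mul_natCast {α : ℝ} (hα : 0 < α) {n : ℤ} (hn : 1 / (2 * α) = n) :
    ∃ k : ℕ, 0 < k ∧ α = 1 / (2 * k) := by
  have hn_pos : 0 < n := by exact_mod_cast hn ▸ (by positivity : (0 : ℝ) < 1 / (2 * α))
  refine ⟨n.toNat, by omega, ?_⟩
  rw [show ((n.toNat : ℕ) : ℝ) = n by exact_mod_cast Int.toNat_of_nonneg hn_pos.le, ← hn]
  field_simp

theorem pc_afdm_continuity_criterion_general (α : ℝ) (N : ℕ) (hN : 0 < N) :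
    (∀ m : ℕ, m ≤ N - 1 → ∀ r : ℤ,
        (m : ℝ) / N < (r : ℝ) → (r : ℝ) < 2 * α + (m : ℝ) / N →
        Complex.exp (-(2 * π * Complex.I * (((N : ℝ) * r - m) / (2 * α)))) - 1 = 0)
      ↔ (α ≤ 1 / (2 * N) ∨ ∃ k : ℕ, 0 < k ∧ α = 1 / (2 * k)) := by
  constructor
  · intro h
    refine or_iff_not_imp_left.mpr fun hα => ?_
    rw [not_le] at hα
    obtain ⟨h₁, h₂⟩ := pred_div_lt_one_and_one_lt_two_mul_add_pred_div hN hα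
    have hjump := h (N - 1) le_rfl 1 h₁ h₂
    rw [show ((N : ℝ) * ((1 : ℤ) : ℂ) - ((N - 1 : ℕ) : ℂ)) / (2 * α) = ((1 / (2 * α) : ℝ) : ℂ) by
      push_cast [Nat.cast_sub hN]; ring] at hjump
    obtain ⟨n, hn⟩ := (exp_neg_two_pi_I_mul_sub_one_eq_zero_iff _).mp hjump
    exact exists_eq_one_div_two_mul_natCast ((by positivity : (0 : ℝ) < 1 / (2 * N)).trans hα) hn
  · rintro (hα | ⟨k, -, rfl⟩) m - r h₁ h₂
    · exact (not_lt_two_mul_add_div_of_div_lt hN hα h₁ h₂).elim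
    · rw [show ((N : ℝ) * (r : ℂ) - m) / (2 * (1 / (2 * k) : ℝ)) = (((N * r - m) * k : ℤ) : ℝ) by
        push_cast; field_simp]
      exact (exp_neg_two_pi_I_mul_sub_one_eq_zero_iff _).mpr ⟨_, rfl⟩

theorem pc_afdm_continuity_criterion (α : ℝ) (hα : 0 < α) (N : ℕ) (hN : 0 < N) :
    (∀ m : ℕ, m ≤ N - 1 → ∀ r : ℤ,
        (m : ℝ) / N < (r : ℝ) → (r : ℝ) < 2 * α + (m : ℝ) / N →
        Complex.exp (-(2 * π * Complex.I * (((N : ℝ) * r - m) / (2 * α)))) - 1 = 0)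
      ↔ (α ≤ 1 / (2 * N) ∨ ∃ k : ℕ, 0 < k ∧ α = 1 / (2 * k)) :=
  pc_afdm_continuity_criterion_general α N hN
end

section
/- For constants c₁, ..., c_M ∈ ℂ and distinct reals τ₁, ..., τ_M, with A(f) = Σ_k c_k e^{−j2πfτ_k}, one has ∫_F^∞ |A(f)|²/(4π²f²) df = (Σ_k |c_k|²)/(4π²F) + O(F⁻²) as F → ∞. -/
open Real Complex MeasureTheory

open Set Filter Topology
open scoped ComplexConjugate

/-!
Expanding `‖∑ k, c k e^{i θ_k f}‖²` gives `∑_{k,l} c_k c̄_l e^{i(θ_k - θ_l) f}`. Against `1/f²` on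
`(F, ∞)` each diagonal term integrates exactly to `‖c_k‖²/F`, while for `α = θ_k - θ_l ≠ 0` one
integration by parts (antiderivative `e^{iαf}/(iαf²)`, remainder `O(∫ f⁻³)`) shows
`‖∫_F^∞ e^{iαf}/f² df‖ ≤ 2/(|α| F²)`. The theorem is the case `θ_k = -2πτ_k`, divided by `4π²`.
-/

lemma rpow_neg_natCast_eq_inv_pow (x : ℝ) (n : ℕ) : x ^ (-(n : ℝ)) = (x ^ n)⁻¹ := by
  rw [Real.rpow_neg_natCast, zpow_neg, zpow_natCast]

lemma integrableOn_Ioi_inv_pow {n : ℕ} (hn : 2 ≤ n) {F : ℝ} (hF : 0 < F) :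
    IntegrableOn (fun x : ℝ => (x ^ n)⁻¹) (Ioi F) :=
  (integrableOn_Ioi_rpow_of_lt (by norm_cast; omega) hF).congr_fun
    (fun x _ => rpow_neg_natCast_eq_inv_pow x n) measurableSet_Ioi

lemma integral_Ioi_inv_pow {n : ℕ} (hn : 2 ≤ n) {F : ℝ} (hF : 0 < F) :
    ∫ x in Ioi F, (x ^ n)⁻¹ = (((n : ℝ) - 1) * F ^ (n - 1))⁻¹ := by
  have hn1 : ((n - 1 : ℕ) : ℝ) = n - 1 := by rw [Nat.cast_sub (by omega : 1 ≤ n), Nat.cast_one]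
  rw [← setIntegral_congr_fun measurableSet_Ioi (fun x _ => rpow_neg_natCast_eq_inv_pow x n),
    integral_Ioi_rpow_of_lt (by norm_cast; omega) hF,
    show -(n : ℝ) + 1 = -((n - 1 : ℕ) : ℝ) by rw [hn1]; ring,
    rpow_neg_natCast_eq_inv_pow, hn1, mul_inv, neg_div, div_neg, neg_neg, div_eq_mul_inv,
    mul_comm]

lemma norm_exp_mul_I_div_pow {α x : ℝ} (hx : 0 < x) (n : ℕ) :
    ‖cexp (↑(α * x) * I) / (x : ℂ) ^ n‖ = (x ^ n)⁻¹ := by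
  rw [norm_div, norm_exp_ofReal_mul_I, norm_pow, norm_real, Real.norm_of_nonneg hx.le, one_div]

lemma integrableOn_Ioi_exp_mul_I_div_pow (α : ℝ) {n : ℕ} (hn : 2 ≤ n) {F : ℝ} (hF : 0 < F) :
    IntegrableOn (fun x : ℝ => cexp (↑(α * x) * I) / (x : ℂ) ^ n) (Ioi F) := by
  refine (integrableOn_Ioi_inv_pow hn hF).mono' ?_ ?_
  · refine ContinuousOn.aestronglyMeasurable (fun x hx => ?_) measurableSet_Ioi
    have hx0 : (x : ℂ) ^ n ≠ 0 := pow_ne_zero n (ofReal_ne_zero.2 (hF.trans hx).ne')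
    exact ((by fun_prop : Continuous fun y : ℝ => cexp (↑(α * y) * I)).continuousAt.div
      (by fun_prop : Continuous fun y : ℝ => (y : ℂ) ^ n).continuousAt hx0).continuousWithinAt
  · exact (ae_restrict_iff' measurableSet_Ioi).2 (Eventually.of_forall fun x hx =>
      (norm_exp_mul_I_div_pow (hF.trans hx) n).le)

lemma norm_integral_Ioi_exp_mul_I_div_pow_le (α : ℝ) {n : ℕ} (hn : 2 ≤ n) {F : ℝ}
    (hF : 0 < F) :
    ‖∫ x in Ioi F, cexp (↑(α * x) * I) / (x : ℂ) ^ n‖ ≤ (((n : ℝ) - 1) * F ^ (n - 1))⁻¹ := by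
  rw [← integral_Ioi_inv_pow hn hF]
  exact norm_integral_le_of_norm_le (integrableOn_Ioi_inv_pow hn hF)
    ((ae_restrict_iff' measurableSet_Ioi).2 (Eventually.of_forall fun x hx =>
      (norm_exp_mul_I_div_pow (hF.trans hx) n).le))

lemma integral_Ioi_ofReal_inv_pow {n : ℕ} (hn : 2 ≤ n) {F : ℝ} (hF : 0 < F) :
    ∫ x in Ioi F, ((x : ℂ) ^ n)⁻¹ = ((((n : ℝ) - 1) * F ^ (n - 1))⁻¹ : ℝ) := by
  rw [← integral_Ioi_inv_pow hn hF, ← integral_complex_ofReal]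
  push_cast
  rfl

lemma hasDerivAt_exp_mul_I_div {α : ℝ} (hα : α ≠ 0) {x : ℝ} (hx : x ≠ 0) :
    HasDerivAt (fun y : ℝ => cexp (↑(α * y) * I) / (α * I * (y : ℂ) ^ 2))
      (cexp (↑(α * x) * I) / (x : ℂ) ^ 2 - 2 / (α * I) * (cexp (↑(α * x) * I) / (x : ℂ) ^ 3))
      x := by
  have hα' : (α : ℂ) ≠ 0 := ofReal_ne_zero.2 hα
  have hαI : (α : ℂ) * I ≠ 0 := mul_ne_zero hα' I_ne_zero
  have hx' : (x : ℂ) ≠ 0 := ofReal_ne_zero.2 hx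
  have hexp : HasDerivAt (fun y : ℝ => cexp (↑(α * y) * I)) (cexp (↑(α * x) * I) * (α * I)) x := by
    simpa using ((hasDerivAt_id x).ofReal_comp.const_mul (α : ℂ)).mul_const I |>.cexp
  have hden : HasDerivAt (fun y : ℝ => (α : ℂ) * I * (y : ℂ) ^ 2) (α * I * (2 * x)) x := by
    simpa using ((hasDerivAt_id x).ofReal_comp.pow 2).const_mul ((α : ℂ) * I)
  refine (hexp.div hden (mul_ne_zero hαI (pow_ne_zero 2 hx'))).congr_deriv ?_
  field_simp

lemma norm_exp_mul_I_div_mul_I_mul_sq (α y : ℝ) :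
    ‖cexp (↑(α * y) * I) / (α * I * (y : ℂ) ^ 2)‖ = (|α| * y ^ 2)⁻¹ := by
  rw [norm_div, norm_exp_ofReal_mul_I, norm_mul, norm_mul, norm_I, norm_pow, norm_real, norm_real,
    Real.norm_eq_abs, Real.norm_eq_abs, sq_abs, mul_one, one_div]

lemma integral_Ioi_exp_mul_I_div_sq_eq {α : ℝ} (hα : α ≠ 0) {F : ℝ} (hF : 0 < F) :
    ∫ x in Ioi F, cexp (↑(α * x) * I) / (x : ℂ) ^ 2 =
      2 / (α * I) * (∫ x in Ioi F, cexp (↑(α * x) * I) / (x : ℂ) ^ 3)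
        - cexp (↑(α * F) * I) / (α * I * (F : ℂ) ^ 2) := by
  have h2 := integrableOn_Ioi_exp_mul_I_div_pow α le_rfl hF
  have h3 := (integrableOn_Ioi_exp_mul_I_div_pow α (by norm_num : 2 ≤ 3) hF).const_mul
    (2 / (α * I))
  have htendsto : Tendsto (fun y : ℝ => cexp (↑(α * y) * I) / (α * I * (y : ℂ) ^ 2)) atTop
      (𝓝 0) := by
    refine tendsto_zero_iff_norm_tendsto_zero.2 ?_
    simp_rw [norm_exp_mul_I_div_mul_I_mul_sq]
    exact tendsto_inv_atTop_zero.comp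
      ((tendsto_pow_atTop two_ne_zero).const_mul_atTop (abs_pos.2 hα))
  have hftc := integral_Ioi_of_hasDerivAt_of_tendsto'
    (fun x hx => hasDerivAt_exp_mul_I_div hα (hF.trans_le hx).ne') (h2.sub h3) htendsto
  rw [integral_sub h2 h3, integral_const_mul] at hftc
  linear_combination hftc

lemma norm_integral_Ioi_exp_mul_I_div_sq_le {α : ℝ} (hα : α ≠ 0) {F : ℝ} (hF : 0 < F) :
    ‖∫ x in Ioi F, cexp (↑(α * x) * I) / (x : ℂ) ^ 2‖ ≤ 2 / (|α| * F ^ 2) := by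
  have hcube := norm_integral_Ioi_exp_mul_I_div_pow_le α (by norm_num : 2 ≤ 3) hF
  have hαI : ‖2 / ((α : ℂ) * I)‖ = 2 / |α| := by simp
  rw [integral_Ioi_exp_mul_I_div_sq_eq hα hF]
  calc _ ≤ ‖2 / ((α : ℂ) * I)‖ * ‖∫ x in Ioi F, cexp (↑(α * x) * I) / (x : ℂ) ^ 3‖
          + ‖cexp (↑(α * F) * I) / (α * I * (F : ℂ) ^ 2)‖ :=
        (norm_sub_le _ _).trans_eq (by rw [norm_mul])
    _ ≤ 2 / |α| * ((3 - 1) * F ^ 2)⁻¹ + (|α| * F ^ 2)⁻¹ := by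
        rw [hαI, norm_exp_mul_I_div_mul_I_mul_sq]
        gcongr
        exact_mod_cast hcube
    _ = 2 / (|α| * F ^ 2) := by
        have : 0 < |α| := abs_pos.2 hα
        field_simp
        ring

lemma ofReal_sq_norm_sum_mul_exp {ι : Type*} [Fintype ι] (c : ι → ℂ) (θ : ι → ℝ) :
    ((‖∑ k, c k * cexp (θ k * I)‖ ^ 2 : ℝ) : ℂ) =
      ∑ k, ∑ l, c k * conj (c l) * cexp (↑(θ k - θ l) * I) := by
  rw [ofReal_pow, ← mul_conj', map_sum, Finset.sum_mul_sum]
  refine Finset.sum_congr rfl fun k _ => Finset.sum_congr rfl fun l _ => ?_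
  rw [map_mul, ← exp_conj, map_mul, conj_ofReal, conj_I, ofReal_sub, sub_mul, sub_eq_add_neg,
    Complex.exp_add, mul_neg, ← neg_mul]
  ring

theorem exists_abs_integral_Ioi_sq_norm_div_sq_sub_le {ι : Type*} [Fintype ι] (c : ι → ℂ)
    {θ : ι → ℝ} (hθ : Function.Injective θ) :
    ∃ C : ℝ, ∀ F : ℝ, 0 < F →
      |(∫ f in Ioi F, ‖∑ k, c k * cexp (↑(θ k * f) * I)‖ ^ 2 / f ^ 2)
        - (∑ k, ‖c k‖ ^ 2) / F| ≤ C / F ^ 2 := by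
  classical
  refine ⟨∑ k, ∑ l ∈ Finset.univ.erase k, ‖c k‖ * ‖c l‖ * (2 / |θ k - θ l|), fun F hF => ?_⟩
  set J : ℝ → ℂ := fun α => ∫ x in Ioi F, cexp (↑(α * x) * I) / (x : ℂ) ^ 2 with hJ
  have hexpand : ((∫ f in Ioi F, ‖∑ k, c k * cexp (↑(θ k * f) * I)‖ ^ 2 / f ^ 2 : ℝ) : ℂ) =
      ∑ k, ∑ l, c k * conj (c l) * J (θ k - θ l) := by
    have hint : ∀ k l, IntegrableOn
        (fun x : ℝ => c k * conj (c l) * (cexp (↑((θ k - θ l) * x) * I) / (x : ℂ) ^ 2)) (Ioi F) :=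
      fun k l => (integrableOn_Ioi_exp_mul_I_div_pow _ le_rfl hF).const_mul _
    calc _ = ∫ f in Ioi F, ∑ k, ∑ l,
          c k * conj (c l) * (cexp (↑((θ k - θ l) * f) * I) / (f : ℂ) ^ 2) := by
          rw [← integral_complex_ofReal]
          congr 1 with f
          rw [ofReal_div, ofReal_pow f, ofReal_sq_norm_sum_mul_exp c (θ · * f)]
          simp_rw [Finset.sum_div, ← sub_mul, mul_div_assoc]
      _ = _ := by
          rw [integral_finsetSum _ fun k _ => integrable_finsetSum _ fun l _ => hint k l]
          refine Finset.sum_congr rfl fun k _ => ?_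
          rw [integral_finsetSum _ fun l _ => hint k l]
          exact Finset.sum_congr rfl fun l _ => integral_const_mul _ _
  have hdiag : (((∑ k, ‖c k‖ ^ 2) / F : ℝ) : ℂ) = ∑ k, c k * conj (c k) * J (θ k - θ k) := by
    simp_rw [hJ, sub_self, zero_mul, ofReal_zero, zero_mul, Complex.exp_zero, one_div,
      integral_Ioi_ofReal_inv_pow le_rfl hF, mul_conj']
    push_cast
    norm_num [Finset.sum_mul, div_eq_mul_inv]
  calc _ = ‖∑ k, ∑ l ∈ Finset.univ.erase k, c k * conj (c l) * J (θ k - θ l)‖ := by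
        rw [← Real.norm_eq_abs, ← Complex.norm_real, ofReal_sub, hexpand, hdiag,
          ← Finset.sum_sub_distrib]
        congr 1
        refine Finset.sum_congr rfl fun k _ => ?_
        rw [← Finset.add_sum_erase _ _ (Finset.mem_univ k), add_sub_cancel_left]
    _ ≤ ∑ k, ∑ l ∈ Finset.univ.erase k, ‖c k‖ * ‖c l‖ * (2 / (|θ k - θ l| * F ^ 2)) := by
        refine (norm_sum_le _ _).trans (Finset.sum_le_sum fun k _ =>
          (norm_sum_le _ _).trans (Finset.sum_le_sum fun l hl => ?_))
        rw [norm_mul, norm_mul, Complex.norm_conj]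
        exact mul_le_mul_of_nonneg_left (norm_integral_Ioi_exp_mul_I_div_sq_le
          (sub_ne_zero.2 (hθ.ne (Finset.ne_of_mem_erase hl).symm)) hF) (by positivity)
    _ = _ := by
        simp_rw [Finset.sum_div, mul_div_assoc, div_div]

theorem trig_sum_tail_coefficient
    (M : ℕ) (c : Fin M → ℂ) (τ : Fin M → ℝ) (hτ : Function.Injective τ) :
    ∃ C : ℝ, ∀ F : ℝ, 1 ≤ F →
      |(∫ f in Set.Ioi F,
          (‖∑ k, c k * Complex.exp (-(2 * π * Complex.I * f * τ k))‖) ^ 2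
            / (4 * π ^ 2 * f ^ 2))
        - (∑ k, (‖c k‖) ^ 2) / (4 * π ^ 2 * F)| ≤ C / F ^ 2 := by
  have hθ : Function.Injective fun k => -(2 * π * τ k) :=
    fun k l h => hτ (by simpa [pi_ne_zero] using h)
  obtain ⟨C, hC⟩ := exists_abs_integral_Ioi_sq_norm_div_sq_sub_le c hθ
  have hπ : 0 < 4 * π ^ 2 := by positivity
  refine ⟨C / (4 * π ^ 2), fun F hF => ?_⟩
  have hphase : ∀ (f : ℝ) k, -(2 * π * I * f * τ k) = ↑(-(2 * π * τ k) * f) * I := by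
    intros; push_cast; ring
  set K := 4 * π ^ 2
  simp_rw [hphase, mul_comm K, ← div_div, integral_div]
  rw [← sub_div, abs_div, abs_of_pos hπ, div_right_comm C]
  exact div_le_div_of_nonneg_right (hC F (by linarith)) hπ.le
end
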